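/- For integers m ≥ 1, real x with |x| < 1, and 0 < t < 1, one has Li_{1,…,1}^{(x)}(t) (m ones) = ∑_{j=0}^{m} (−1)^{m−j} I_{m−j}(t) · (−log(1−t))^j / j!, where I_l(t) = ∫_{0<u₁<⋯<u_l<t} du₁/(1−u₁) ⋯ du_{l-1}/(1−u_{l-1}) · (1−u_l^x)/(1−u_l) du_l (and I_0(t) = 1), and Li_{1,…,1}^{(x)}(t) = ∑_{0<m₁<⋯<m_m} t^{m_m+x}/((m₁+x)⋯(m_m+x)). -/

import Mathlib

/-- Iterated integral of du/(1−u) repeated j times from 0 to t: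
K j t = ∫_{0<u₁<⋯<u_j<t} ∏ du_i/(1−u_i). -/
noncomputable def Kiter : ℕ → ℝ → ℝ
  | 0, _ => 1
  | (j + 1), t => ∫ u in (0 : ℝ)..t, Kiter j u / (1 - u)

/-- I_l(t) = ∫_{0<u₁<⋯<u_l<t} du₁/(1−u₁)⋯du_{l−1}/(1−u_{l−1}) · (1−u_l^x)/(1−u_l) du_l,
with I_0(t) = 1. -/
noncomputable def Ix (x : ℝ) : ℕ → ℝ → ℝ
  | 0, _ => 1
  | (l + 1), t => ∫ u in (0 : ℝ)..t, Kiter l u * ((1 - u ^ x) / (1 - u))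

/-- Hurwitz multiple polylogarithm Li^{(x)}_{1,…,1}(t) with m ones:
∑_{0<m₁<⋯<m_m} t^{m_m+x}/((m₁+x)⋯(m_m+x)). -/
noncomputable def LiOnesX (x : ℝ) : ℕ → ℝ → ℝ
  | 0, _ => 1
  | (l + 1), t =>
      ∑' f : {f : Fin (l + 1) → ℕ // StrictMono f ∧ 0 < f 0},
        t ^ ((f.1 (Fin.last l) : ℝ) + x) / ∏ i, ((f.1 i : ℝ) + x)

/-!
Both sides satisfy `F_{m+1}(t) = ∫_0^t F_m(u) du/(1-u)` with the same
`F_1(t) = ∫_0^t u^x du/(1-u)`. For the series this is termwise integration of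
`u^(n+x)/(1-u) = ∑_k u^(n+k+x)`; the terms are nonnegative, so dominated convergence with the
series itself as dominating function also gives convergence. For the right-hand side one
differentiates: the iterated integrals of `du/(1-u)` are `(-log(1-t))^j/j!`, so the terms in which
`I` is differentiated add up to a multiple of `∑_j (-1)^j (m choose j) = 0`, and the others give
the right-hand side of index `m` divided by `1 - u`.
-/

open Set MeasureTheory intervalIntegral Real
open scoped Nat

lemma sum_range_neg_one_pow_mul_pow_div_factorial {m : ℕ} (hm : m ≠ 0) (a : ℝ) :
    ∑ j ∈ Finset.range (m + 1), (-1 : ℝ) ^ (m - j) * (a ^ (m - j) / (m - j)!) * (a ^ j / j !)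
      = 0 := by
  have hterm : ∀ j ∈ Finset.range (m + 1), (-1 : ℝ) ^ (m - j) * (a ^ (m - j) / (m - j)!)
      * (a ^ j / j !) = a ^ j * (-a) ^ (m - j) * m.choose j / m ! := by
    intro j hj
    rw [Nat.cast_choose ℝ (Nat.lt_succ_iff.1 (Finset.mem_range.1 hj)), neg_pow a]
    field_simp
  rw [Finset.sum_congr rfl hterm, ← Finset.sum_div, ← add_pow, add_neg_cancel, zero_pow hm,
    zero_div]

lemma hasSum_integral_mul_rpow {ι : Type*} [Countable ι] {c a : ι → ℝ}
    (hc : ∀ i, 0 ≤ c i) (ha : ∀ i, -1 < a i) {f : ℝ → ℝ} {t : ℝ} (ht : 0 ≤ t)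
    (hf : ∀ u ∈ Ioc 0 t, HasSum (fun i => c i * u ^ a i) (f u))
    (hfi : IntervalIntegrable f volume 0 t) :
    HasSum (fun i => c i * (t ^ (a i + 1) / (a i + 1))) (∫ u in 0..t, f u) := by
  rw [← uIoc_of_le ht] at hf
  have hsum := hasSum_integral_of_dominated_convergence (F := fun i u => c i * u ^ a i) _
    (fun i => ((measurable_id.pow_const _).const_mul _).aestronglyMeasurable)
    (fun i => Filter.Eventually.of_forall fun u hu => (Real.norm_of_nonneg (mul_nonneg (hc i)
      (rpow_nonneg (uIoc_of_le ht ▸ hu).1.le _))).le)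
    (Filter.Eventually.of_forall fun u hu => (hf u hu).summable)
    (hfi.congr_ae ((ae_restrict_iff' measurableSet_uIoc).2
      (Filter.Eventually.of_forall fun u hu => (hf u hu).tsum_eq.symm)))
    (Filter.Eventually.of_forall hf)
  refine (congrArg (HasSum · _) (funext fun i => ?_)).mp hsum
  rw [intervalIntegral.integral_const_mul, integral_rpow (Or.inl (ha i)),
    zero_rpow (by linarith [ha i]), sub_zero]

lemma uIcc_zero_subset_Iio_one {t : ℝ} (ht : t < 1) : uIcc 0 t ⊆ Iio 1 :=
  fun _ hu => hu.2.trans_lt (max_lt zero_lt_one ht)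

noncomputable def negLogPowDiv (j : ℕ) (t : ℝ) : ℝ := (-log (1 - t)) ^ j / j !

lemma hasDerivAt_neg_log_one_sub {u : ℝ} (hu : u < 1) :
    HasDerivAt (fun v : ℝ => -log (1 - v)) (1 - u)⁻¹ u := by
  have h := (((hasDerivAt_id u).const_sub 1).log (sub_ne_zero.2 hu.ne')).neg
  refine h.congr_deriv ?_
  simp [neg_div]

lemma hasDerivAt_negLogPowDiv_succ (j : ℕ) {u : ℝ} (hu : u < 1) :
    HasDerivAt (negLogPowDiv (j + 1)) (negLogPowDiv j u / (1 - u)) u := by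
  have h := ((hasDerivAt_neg_log_one_sub hu).pow (j + 1)).div_const ((j + 1)! : ℝ)
  refine h.congr_deriv ?_
  simp only [negLogPowDiv, Nat.factorial_succ, Nat.add_sub_cancel]
  push_cast
  field_simp

lemma continuousOn_negLogPowDiv (j : ℕ) : ContinuousOn (negLogPowDiv j) (Iio 1) := by
  cases j with
  | zero => exact (continuousOn_const (c := (1 : ℝ))).congr fun _ _ => by simp [negLogPowDiv]
  | succ j => exact fun u hu => (hasDerivAt_negLogPowDiv_succ j hu).continuousAt.continuousWithinAt

lemma negLogPowDiv_zero_right {j : ℕ} (hj : j ≠ 0) : negLogPowDiv j 0 = 0 := by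
  simp [negLogPowDiv, hj]

lemma Kiter_eq_negLogPowDiv (j : ℕ) {t : ℝ} (ht : t < 1) : Kiter j t = negLogPowDiv j t := by
  induction j generalizing t with
  | zero => simp [Kiter, negLogPowDiv]
  | succ j ih =>
    have hsub := uIcc_zero_subset_Iio_one ht
    have hcont : ContinuousOn (fun u => negLogPowDiv j u / (1 - u)) (uIcc 0 t) :=
      ((continuousOn_negLogPowDiv j).div (continuousOn_const.sub continuousOn_id)
        fun u hu => sub_ne_zero.2 (ne_of_gt hu)).mono hsub
    rw [Kiter, integral_congr (g := fun u => negLogPowDiv j u / (1 - u))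
        fun u hu => by simp only [ih (hsub hu)],
      integral_eq_sub_of_hasDerivAt (fun u hu => hasDerivAt_negLogPowDiv_succ j (hsub hu))
        hcont.intervalIntegrable, negLogPowDiv_zero_right j.succ_ne_zero, sub_zero]

lemma continuousOn_Kiter (j : ℕ) : ContinuousOn (Kiter j) (Iio 1) :=
  (continuousOn_negLogPowDiv j).congr fun _ hu => Kiter_eq_negLogPowDiv j hu

section

variable {x : ℝ}

lemma intervalIntegrable_Ix_integrand (hx : -1 < x) (l : ℕ) {b : ℝ} (hb : b < 1) :
    IntervalIntegrable (fun u => Kiter l u * ((1 - u ^ x) / (1 - u))) volume 0 b := by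
  have hK : ContinuousOn (fun u => Kiter l u / (1 - u)) (uIcc 0 b) :=
    ((continuousOn_Kiter l).div (continuousOn_const.sub continuousOn_id)
      fun u hu => sub_ne_zero.2 (ne_of_gt hu)).mono (uIcc_zero_subset_Iio_one hb)
  have h := hK.intervalIntegrable.sub ((intervalIntegrable_rpow' hx).mul_continuousOn hK)
  refine h.congr_uIoo fun u _ => ?_
  simp only
  ring

lemma continuousOn_Ix (hx : -1 < x) (k : ℕ) {b : ℝ} (hb : b < 1) :
    ContinuousOn (Ix x k) (uIcc 0 b) := by
  cases k with
  | zero => exact (continuousOn_const (c := (1 : ℝ))).congr fun _ _ => rfl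
  | succ l =>
    exact continuousOn_primitive_interval' (intervalIntegrable_Ix_integrand hx l hb) left_mem_uIcc

lemma hasDerivAt_Ix_succ (hx : -1 < x) (l : ℕ) {u : ℝ} (hu : u ∈ Ioo 0 1) :
    HasDerivAt (Ix x (l + 1)) (Kiter l u * ((1 - u ^ x) / (1 - u))) u := by
  have hcont : ContinuousOn (fun u => Kiter l u * ((1 - u ^ x) / (1 - u))) (Ioo 0 1) :=
    ((continuousOn_Kiter l).mono fun _ hv => hv.2).mul
      ((continuousOn_const.sub fun v hv => (continuousAt_rpow_const v x
        (Or.inl hv.1.ne')).continuousWithinAt).div (continuousOn_const.sub continuousOn_id)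
        fun v hv => sub_ne_zero.2 hv.2.ne')
  exact integral_hasDerivAt_right (intervalIntegrable_Ix_integrand hx l hu.2)
    (hcont.stronglyMeasurableAtFilter isOpen_Ioo u hu) (hcont.continuousAt (isOpen_Ioo.mem_nhds hu))

noncomputable def IxLogSum (x : ℝ) (m : ℕ) (t : ℝ) : ℝ :=
  ∑ j ∈ Finset.range (m + 1), (-1 : ℝ) ^ (m - j) * Ix x (m - j) t * negLogPowDiv j t

lemma IxLogSum_zero_right {m : ℕ} (hm : m ≠ 0) : IxLogSum x m 0 = 0 := by
  refine Finset.sum_eq_zero fun j hj => ?_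
  rcases eq_or_ne j 0 with rfl | hj0
  · obtain ⟨l, rfl⟩ := Nat.exists_eq_succ_of_ne_zero hm
    simp [Ix]
  · rw [negLogPowDiv_zero_right hj0, mul_zero]

lemma continuousOn_IxLogSum (hx : -1 < x) (m : ℕ) {b : ℝ} (hb : b < 1) :
    ContinuousOn (IxLogSum x m) (uIcc 0 b) :=
  continuousOn_finsetSum _ fun j _ => (continuousOn_const.mul (continuousOn_Ix hx _ hb)).mul
    ((continuousOn_negLogPowDiv j).mono (uIcc_zero_subset_Iio_one hb))

lemma intervalIntegrable_IxLogSum_div (hx : -1 < x) (m : ℕ) {b : ℝ} (hb : b < 1) :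
    IntervalIntegrable (fun u => IxLogSum x m u / (1 - u)) volume 0 b :=
  ((continuousOn_IxLogSum hx m hb).div (continuousOn_const.sub continuousOn_id)
    fun _ hu => sub_ne_zero.2 (uIcc_zero_subset_Iio_one hb hu).ne').intervalIntegrable

lemma hasDerivAt_IxLogSum_succ (hx : -1 < x) {m : ℕ} (hm : m ≠ 0) {u : ℝ}
    (hu : u ∈ Ioo 0 1) : HasDerivAt (IxLogSum x (m + 1)) (IxLogSum x m u / (1 - u)) u := by
  set q := (1 - u ^ x) / (1 - u)
  let dI : ℕ → ℝ := fun k => if k = 0 then 0 else negLogPowDiv (k - 1) u * q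
  let dE : ℕ → ℝ := fun j => if j = 0 then 0 else negLogPowDiv (j - 1) u / (1 - u)
  have hI : ∀ k, HasDerivAt (Ix x k) (dI k) u := by
    rintro (_ | l)
    · exact hasDerivAt_const u (1 : ℝ)
    · simpa [dI, q, Kiter_eq_negLogPowDiv l hu.2] using hasDerivAt_Ix_succ hx l hu
  have hE : ∀ j, HasDerivAt (negLogPowDiv j) (dE j) u := by
    rintro (_ | j)
    · exact (hasDerivAt_const u (1 : ℝ)).congr_of_eventuallyEq
        (Filter.Eventually.of_forall fun _ => by simp [negLogPowDiv])
    · simpa [dE] using hasDerivAt_negLogPowDiv_succ j hu.2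
  have hsum := HasDerivAt.fun_sum (u := Finset.range (m + 2)) fun j _ =>
    ((hI (m + 1 - j)).const_mul ((-1 : ℝ) ^ (m + 1 - j))).mul (hE j)
  have hA : ∑ j ∈ Finset.range (m + 2),
      (-1 : ℝ) ^ (m + 1 - j) * dI (m + 1 - j) * negLogPowDiv j u = 0 := by
    have hterm : ∀ j ∈ Finset.range (m + 1),
        (-1 : ℝ) ^ (m + 1 - j) * dI (m + 1 - j) * negLogPowDiv j u = -q * ((-1 : ℝ) ^ (m - j)
          * ((-log (1 - u)) ^ (m - j) / (m - j)!) * ((-log (1 - u)) ^ j / j !)) := by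
      intro j hj
      have hj' : m + 1 - j = m - j + 1 := by have := Finset.mem_range.1 hj; omega
      simp only [dI, hj', negLogPowDiv, if_neg (Nat.succ_ne_zero _), Nat.add_sub_cancel, pow_succ]
      ring
    rw [Finset.sum_range_succ, Finset.sum_congr rfl hterm, ← Finset.mul_sum,
      sum_range_neg_one_pow_mul_pow_div_factorial hm]
    simp [dI]
  have hB : ∑ j ∈ Finset.range (m + 2),
      (-1 : ℝ) ^ (m + 1 - j) * Ix x (m + 1 - j) u * dE j = IxLogSum x m u / (1 - u) := by
    rw [Finset.sum_range_succ', IxLogSum, Finset.sum_div]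
    simp [dE, mul_div_assoc]
  refine hsum.congr_deriv ?_
  rw [Finset.sum_add_distrib, hA, hB, zero_add]

lemma IxLogSum_succ_eq_integral (hx : -1 < x) {m : ℕ} (hm : m ≠ 0) {t : ℝ} (ht0 : 0 ≤ t)
    (ht : t < 1) : IxLogSum x (m + 1) t = ∫ u in 0..t, IxLogSum x m u / (1 - u) := by
  have hcont := continuousOn_IxLogSum hx (m + 1) ht
  rw [uIcc_of_le ht0] at hcont
  rw [integral_eq_sub_of_hasDeriv_right_of_le ht0 hcont
    (fun u hu => (hasDerivAt_IxLogSum_succ hx hm ⟨hu.1, hu.2.trans ht⟩).hasDerivWithinAt)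
    (intervalIntegrable_IxLogSum_div hx m ht), IxLogSum_zero_right m.succ_ne_zero, sub_zero]

lemma IxLogSum_one_eq_integral (hx : -1 < x) {t : ℝ} (ht : t < 1) :
    IxLogSum x 1 t = ∫ u in 0..t, u ^ x / (1 - u) := by
  have hsub := uIcc_zero_subset_Iio_one ht
  have hinv : IntervalIntegrable (fun u : ℝ => 1 / (1 - u)) volume 0 t :=
    (continuousOn_const.div (continuousOn_const.sub continuousOn_id)
      fun u hu => sub_ne_zero.2 (hsub hu).ne').intervalIntegrable
  have hlog : negLogPowDiv 1 t = ∫ u in 0..t, 1 / (1 - u) := by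
    rw [integral_eq_sub_of_hasDerivAt (f := negLogPowDiv 1) (fun u hu => ?_) hinv,
      negLogPowDiv_zero_right one_ne_zero, sub_zero]
    simpa [negLogPowDiv] using hasDerivAt_negLogPowDiv_succ 0 (hsub hu)
  have hIx : Ix x 1 t = ∫ u in 0..t, (1 - u ^ x) / (1 - u) := by simp [Ix, Kiter]
  have hsum : IxLogSum x 1 t = negLogPowDiv 1 t - Ix x 1 t := by
    simp [IxLogSum, Finset.sum_range_succ, Ix, negLogPowDiv, sub_eq_neg_add]
  have hq : IntervalIntegrable (fun u => (1 - u ^ x) / (1 - u)) volume 0 t := by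
    simpa [Kiter] using intervalIntegrable_Ix_integrand hx 0 ht
  rw [hsum, hlog, hIx, ← integral_sub hinv hq]
  congr 1
  funext u
  ring

end

abbrev IncTuple (l : ℕ) := {f : Fin (l + 1) → ℕ // StrictMono f ∧ 0 < f 0}

namespace IncTuple

lemma one_le {l : ℕ} (f : IncTuple l) (i : Fin (l + 1)) : 1 ≤ f.1 i :=
  f.2.2.trans_le (f.2.1.monotone (Fin.zero_le i))

def equivNat : ℕ ≃ IncTuple 0 where
  toFun n := ⟨fun _ => n + 1, fun i j h => absurd h (by simp [Fin.eq_zero i, Fin.eq_zero j]),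
    n.succ_pos⟩
  invFun f := f.1 0 - 1
  left_inv n := rfl
  right_inv f := Subtype.ext <| funext fun i => by
    rw [Fin.eq_zero i]
    exact Nat.sub_add_cancel f.2.2

def snocEquiv (l : ℕ) : IncTuple l × ℕ ≃ IncTuple (l + 1) where
  toFun p := ⟨Fin.snoc p.1.1 (p.1.1 (Fin.last l) + (p.2 + 1)),
    by simpa [Fin.insertNth_last'] using
      Fin.strictMono_insertNth_last p.1.2.1 _ (Nat.lt_add_of_pos_right p.2.succ_pos),
    by simpa only [← Fin.castSucc_zero, Fin.snoc_castSucc] using p.1.2.2⟩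
  invFun f := (⟨Fin.init f.1, f.2.1.comp Fin.strictMono_castSucc, f.2.2⟩,
    f.1 (Fin.last (l + 1)) - f.1 (Fin.last l).castSucc - 1)
  left_inv p := by
    ext
    · simp
    · simp only [Fin.snoc_last, Fin.snoc_castSucc]
      omega
  right_inv f := by
    have hlt : f.1 (Fin.last l).castSucc < f.1 (Fin.last (l + 1)) :=
      f.2.1 (Fin.castSucc_lt_last _)
    ext1
    dsimp only
    convert Fin.snoc_init_self f.1 using 2
    simp only [Fin.init]
    omega

end IncTuple

section LiSeries

variable {x : ℝ}

noncomputable def liTerm (x t : ℝ) {l : ℕ} (f : IncTuple l) : ℝ :=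
  t ^ ((f.1 (Fin.last l) : ℝ) + x) / ∏ i, ((f.1 i : ℝ) + x)

lemma IncTuple.prod_cast_add_pos {l : ℕ} (f : IncTuple l) (hx : -1 < x) :
    0 < ∏ i, ((f.1 i : ℝ) + x) :=
  Finset.prod_pos fun i _ => by
    have : (1 : ℝ) ≤ f.1 i := by exact_mod_cast f.one_le i
    linarith

lemma liTerm_equivNat (x t : ℝ) (n : ℕ) :
    liTerm x t (IncTuple.equivNat n) = t ^ ((n : ℝ) + x + 1) / ((n : ℝ) + x + 1) := by
  simp only [liTerm, IncTuple.equivNat, Equiv.coe_fn_mk, Finset.prod_const, Finset.card_univ,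
    Fintype.card_fin, Nat.cast_succ]
  ring_nf

lemma liTerm_snocEquiv (x t : ℝ) {l : ℕ} (p : IncTuple l × ℕ) :
    liTerm x t (IncTuple.snocEquiv l p) = (∏ i, ((p.1.1 i : ℝ) + x))⁻¹
      * (t ^ ((p.1.1 (Fin.last l) : ℝ) + x + p.2 + 1)
        / ((p.1.1 (Fin.last l) : ℝ) + x + p.2 + 1)) := by
  obtain ⟨g, n⟩ := p
  simp only [liTerm, IncTuple.snocEquiv, Equiv.coe_fn_mk, Fin.prod_univ_castSucc,
    Fin.snoc_castSucc, Fin.snoc_last]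
  push_cast
  rw [show (g.1 (Fin.last l) : ℝ) + (n + 1) + x = (g.1 (Fin.last l) : ℝ) + x + n + 1 by ring]
  field_simp

lemma liTerm_mul_pow {u : ℝ} (hu : 0 < u) {l : ℕ} (g : IncTuple l) (n : ℕ) :
    liTerm x u g * u ^ n
      = (∏ i, ((g.1 i : ℝ) + x))⁻¹ * u ^ ((g.1 (Fin.last l) : ℝ) + x + n) := by
  rw [liTerm, rpow_add hu ((g.1 (Fin.last l) : ℝ) + x), rpow_natCast]
  ring

lemma hasSum_liTerm_zero (hx : -1 < x) {t : ℝ} (ht0 : 0 < t) (ht : t < 1) :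
    HasSum (fun f : IncTuple 0 => liTerm x t f) (∫ u in 0..t, u ^ x / (1 - u)) := by
  rw [← IncTuple.equivNat.hasSum_iff]
  have hf : ∀ u ∈ Ioc 0 t,
      HasSum (fun n : ℕ => 1 * u ^ ((n : ℝ) + x)) (u ^ x / (1 - u)) := fun u hu => by
    simpa [rpow_add hu.1, mul_comm, div_eq_mul_inv] using
      (hasSum_geometric_of_lt_one hu.1.le (hu.2.trans_lt ht)).mul_left (u ^ x)
  have hfi : IntervalIntegrable (fun u => u ^ x / (1 - u)) volume 0 t :=
    (intervalIntegrable_rpow' hx).mul_continuousOn ((continuousOn_const.sub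
      continuousOn_id).inv₀ fun u hu => sub_ne_zero.2 (uIcc_zero_subset_Iio_one ht hu).ne')
  simpa [Function.comp_def, liTerm_equivNat] using hasSum_integral_mul_rpow
    (fun _ => zero_le_one) (fun n => by linarith [n.cast_nonneg (α := ℝ)]) ht0.le hf hfi

lemma hasSum_liTerm_succ (hx : -1 < x) {l : ℕ} {F : ℝ → ℝ} {t : ℝ} (ht0 : 0 < t) (ht : t < 1)
    (hF : ∀ u ∈ Ioc 0 t, HasSum (fun f : IncTuple l => liTerm x u f) (F u))
    (hFi : IntervalIntegrable (fun u => F u / (1 - u)) volume 0 t) :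
    HasSum (fun f : IncTuple (l + 1) => liTerm x t f) (∫ u in 0..t, F u / (1 - u)) := by
  rw [← (IncTuple.snocEquiv l).hasSum_iff]
  have hf : ∀ u ∈ Ioc 0 t, HasSum
      (fun p : IncTuple l × ℕ => (∏ i, ((p.1.1 i : ℝ) + x))⁻¹ * u ^ ((p.1.1 (Fin.last l) : ℝ)
        + x + p.2)) (F u / (1 - u)) := by
    intro u hu
    have hgeom := hasSum_geometric_of_lt_one hu.1.le (hu.2.trans_lt ht)
    have hprod := (hF u hu).mul hgeom ((hF u hu).summable.mul_of_nonneg hgeom.summable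
      (fun g => div_nonneg (rpow_nonneg hu.1.le _) (g.prod_cast_add_pos hx).le)
      (fun n => pow_nonneg hu.1.le n))
    simpa only [liTerm_mul_pow hu.1, div_eq_mul_inv] using hprod
  have hsum := hasSum_integral_mul_rpow (ι := IncTuple l × ℕ)
    (c := fun p => (∏ i, ((p.1.1 i : ℝ) + x))⁻¹)
    (a := fun p => (p.1.1 (Fin.last l) : ℝ) + x + p.2)
    (fun p => (inv_pos.2 (p.1.prod_cast_add_pos hx)).le)
    (fun p => by
      have := (Nat.one_le_cast (α := ℝ)).2 (p.1.one_le (Fin.last l))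
      linarith [p.2.cast_nonneg (α := ℝ)])
    ht0.le hf hFi
  simpa only [Function.comp_def, liTerm_snocEquiv] using hsum

lemma hasSum_liTerm (hx : -1 < x) (l : ℕ) {t : ℝ} (ht0 : 0 < t) (ht : t < 1) :
    HasSum (fun f : IncTuple l => liTerm x t f) (IxLogSum x (l + 1) t) := by
  induction l generalizing t with
  | zero => simpa only [IxLogSum_one_eq_integral hx ht] using hasSum_liTerm_zero hx ht0 ht
  | succ l ih =>
    rw [IxLogSum_succ_eq_integral hx l.succ_ne_zero ht0.le ht]
    exact hasSum_liTerm_succ hx ht0 ht (fun u hu => ih hu.1 (hu.2.trans_lt ht))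
      (intervalIntegrable_IxLogSum_div hx (l + 1) ht)

end LiSeries

lemma LiOnesX_eq_IxLogSum {x : ℝ} (hx : -1 < x) (m : ℕ) {t : ℝ} (ht0 : 0 < t) (ht : t < 1) :
    LiOnesX x m t = IxLogSum x m t := by
  cases m with
  | zero => simp [LiOnesX, IxLogSum, Ix, negLogPowDiv]
  | succ l => exact (hasSum_liTerm hx l ht0 ht).tsum_eq

theorem stmt10_general (m : ℕ) (x : ℝ) (hx : |x| < 1)
    (t : ℝ) (ht0 : 0 < t) (ht1 : t < 1) :
    LiOnesX x m t
      = ∑ j ∈ Finset.range (m + 1),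
          (-1 : ℝ) ^ (m - j) * Ix x (m - j) t
            * (-Real.log (1 - t)) ^ j / (Nat.factorial j) := by
  rw [LiOnesX_eq_IxLogSum (neg_lt_of_abs_lt hx) m ht0 ht1, IxLogSum]
  simp only [negLogPowDiv, mul_div_assoc]

/-- Li^{(x)}_{1,…,1}(t) (m ones) = ∑_{j=0}^m (−1)^{m−j} I_{m−j}(t) (−log(1−t))^j/j!. -/
theorem stmt10 (m : ℕ) (hm : 1 ≤ m) (x : ℝ) (hx : |x| < 1)
    (t : ℝ) (ht0 : 0 < t) (ht1 : t < 1) :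
    LiOnesX x m t
      = ∑ j ∈ Finset.range (m + 1),
          (-1 : ℝ) ^ (m - j) * Ix x (m - j) t
            * (-Real.log (1 - t)) ^ j / (Nat.factorial j) :=
  stmt10_general m x hx t ht0 ht1
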